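/- For the normal-form renaming transformation: let φ be a branching-time formula with a subformula Nψ, let p be a fresh proposition, and let φ' be obtained from φ by replacing the occurrence of Nψ by p and conjoining AG(p ↔ Nψ). Then φ' is satisfiable if and only if φ is satisfiable. -/

import Mathlib

/-- Branching-time formulas over propositions `P`, with the forgettable-past
operator `N`; `EU a b` is `E(a U b)`.  `EF`, `AG`, `↔` are derived below. -/
inductive BForm (P : Type) where
  | tt
  | atom (p : P)
  | not (a : BForm P)
  | and (a b : BForm P)
  | EX (a : BForm P)
  | EU (a b : BForm P)
  | N (a : BForm P)
deriving DecidableEq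

/-- Semantics over a labeled tree `(T,V)` at node `x`.  On trees, the
existential until quantifies over descendants; `N a` re-roots the tree at the
current node (forgetting the past). -/
def BSat {P : Type} : Set (List ℕ) → (List ℕ → Set P) → List ℕ → BForm P → Prop
  | _, _, _, .tt => True
  | _, V, x, .atom p => p ∈ V x
  | T, V, x, .not a => ¬ BSat T V x a
  | T, V, x, .and a b => BSat T V x a ∧ BSat T V x b
  | T, V, x, .EX a => ∃ c : ℕ, x ++ [c] ∈ T ∧ BSat T V (x ++ [c]) a
  | T, V, x, .EU a b => ∃ y, x <+: y ∧ y ∈ T ∧ BSat T V y b ∧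
      ∀ z, x <+: z → z <+: y → z ≠ y → BSat T V z a
  | T, V, x, .N a => BSat {y | x ++ y ∈ T} (fun y => V (x ++ y)) [] a

/-- `AG a := ¬EF¬a = ¬E(true U ¬a)`. -/
def BForm.AG {P : Type} (a : BForm P) : BForm P := .not (.EU .tt (.not a))

/-- `a ↔ b` as an abbreviation. -/
def BForm.iff {P : Type} (a b : BForm P) : BForm P :=
  .and (.not (.and a (.not b))) (.not (.and b (.not a)))

/-- Replace every occurrence of the subformula `t` by `r`. -/
def replaceAll {P : Type} [DecidableEq P] (t r : BForm P) : BForm P → BForm P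
  | .tt => if (BForm.tt : BForm P) = t then r else .tt
  | .atom p => if BForm.atom p = t then r else .atom p
  | .not a => if BForm.not a = t then r else .not (replaceAll t r a)
  | .and a b => if BForm.and a b = t then r
      else .and (replaceAll t r a) (replaceAll t r b)
  | .EX a => if BForm.EX a = t then r else .EX (replaceAll t r a)
  | .EU a b => if BForm.EU a b = t then r
      else .EU (replaceAll t r a) (replaceAll t r b)
  | .N a => if BForm.N a = t then r else .N (replaceAll t r a)

/-- `s` occurs as a subformula of `f`. -/
def IsSubf {P : Type} (s : BForm P) : BForm P → Prop
  | .tt => BForm.tt = s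
  | .atom p => BForm.atom p = s
  | .not a => BForm.not a = s ∨ IsSubf s a
  | .and a b => BForm.and a b = s ∨ IsSubf s a ∨ IsSubf s b
  | .EX a => BForm.EX a = s ∨ IsSubf s a
  | .EU a b => BForm.EU a b = s ∨ IsSubf s a ∨ IsSubf s b
  | .N a => BForm.N a = s ∨ IsSubf s a

/-- The propositions occurring in a formula. -/
def atoms {P : Type} : BForm P → Set P
  | .tt => ∅
  | .atom p => {p}
  | .not a => atoms a
  | .and a b => atoms a ∪ atoms b
  | .EX a => atoms a
  | .EU a b => atoms a ∪ atoms b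
  | .N a => atoms a

/-- A tree: prefix-closed, sibling-downward-closed subset of ℕ*. -/
def IsTree (T : Set (List ℕ)) : Prop :=
  [] ∈ T ∧ (∀ x : List ℕ, ∀ c : ℕ, x ++ [c] ∈ T → x ∈ T) ∧
    (∀ x : List ℕ, ∀ c c' : ℕ, x ++ [c] ∈ T → c' < c → x ++ [c'] ∈ T)

/-!
If `AG(p ↔ Nψ)` holds at `x`, then `p` and `Nψ` agree at every descendant of `x`. Every occurrence
of `Nψ` in `φ` is evaluated either at such a descendant or at a node of a re-rooted subtree, and
re-rooting does not change the truth value of an `N`-formula, so `p` may replace `Nψ`. Conversely,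
in a model of `φ`, relabel the fresh `p` to hold exactly where `Nψ` holds; since `p` occurs neither
in `φ` nor in `ψ`, no truth value of these formulas changes.
-/

section

variable {P : Type}

theorem bSat_AG_iff (T : Set (List ℕ)) (V : List ℕ → Set P) (x : List ℕ) (a : BForm P) :
    BSat T V x a.AG ↔ ∀ y ∈ T, x <+: y → BSat T V y a := by
  simp only [BForm.AG, BSat, implies_true, and_true, not_exists, not_and, not_not]
  exact ⟨fun h y hy hxy => h y hxy hy, fun h y hxy hy => h y hy hxy⟩

theorem bSat_iff_iff (T : Set (List ℕ)) (V : List ℕ → Set P) (x : List ℕ) (a b : BForm P) :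
    BSat T V x (a.iff b) ↔ (BSat T V x a ↔ BSat T V x b) := by
  simp only [BForm.iff, BSat]
  tauto

theorem bSat_N_reroot (T : Set (List ℕ)) (V : List ℕ → Set P) (v w : List ℕ) (a : BForm P) :
    BSat {u | v ++ u ∈ T} (fun u => V (v ++ u)) w (.N a) ↔ BSat T V (v ++ w) (.N a) := by
  simp only [BSat, Set.mem_ofPred_eq, List.append_assoc]

theorem bSat_congr_of_atoms {V V' : List ℕ → Set P} (χ : BForm P)
    (hV : ∀ y, ∀ q ∈ atoms χ, q ∈ V y ↔ q ∈ V' y) (T : Set (List ℕ)) (x : List ℕ) :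
    BSat T V x χ ↔ BSat T V' x χ := by
  induction χ generalizing T V V' x with
  | tt => rfl
  | atom q => exact hV x q rfl
  | not a ih => exact not_congr (ih hV T x)
  | and a b iha ihb =>
    exact and_congr (iha (fun y q hq => hV y q (.inl hq)) T x)
      (ihb (fun y q hq => hV y q (.inr hq)) T x)
  | EX a ih =>
    exact exists_congr fun c => and_congr_right fun _ => ih hV T _
  | EU a b iha ihb =>
    exact exists_congr fun y => and_congr_right fun _ => and_congr_right fun _ =>
      and_congr (ihb (fun y q hq => hV y q (.inr hq)) T y)
        (forall₄_congr fun z _ _ _ => iha (fun y q hq => hV y q (.inl hq)) T z)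
  | N a ih => exact ih (fun y => hV (x ++ y)) _ []

theorem atoms_subset_of_isSubf {s : BForm P} (f : BForm P) (h : IsSubf s f) :
    atoms s ⊆ atoms f := by
  induction f with
  | tt | atom => rw [h]
  | not a ih | EX a ih | N a ih =>
    rcases h with rfl | h
    exacts [subset_rfl, ih h]
  | and a b iha ihb | EU a b iha ihb =>
    rcases h with rfl | h | h
    exacts [subset_rfl, (iha h).trans Set.subset_union_left,
      (ihb h).trans Set.subset_union_right]

end

def PrefixClosed (T : Set (List ℕ)) : Prop :=
  ∀ ⦃z y : List ℕ⦄, z <+: y → y ∈ T → z ∈ T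

theorem IsTree.prefixClosed {T : Set (List ℕ)} (hT : IsTree T) : PrefixClosed T := by
  suffices ∀ s z, z ++ s ∈ T → z ∈ T by
    rintro z y ⟨s, rfl⟩
    exact this s z
  intro s
  induction s using List.reverseRecOn with
  | nil => simp
  | append_singleton s c ih =>
    intro z h
    rw [← List.append_assoc] at h
    exact ih z (hT.2.1 _ _ h)

theorem PrefixClosed.reroot {T : Set (List ℕ)} (hT : PrefixClosed T) (v : List ℕ) :
    PrefixClosed {u | v ++ u ∈ T} :=
  fun _ _ hzy => hT ((List.prefix_append_right_inj v).mpr hzy)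

section Replacement

variable {P : Type} [DecidableEq P]

theorem bSat_replaceAll_N_iff {ψ : BForm P} {p : P} (χ : BForm P) {T : Set (List ℕ)}
    (hT : PrefixClosed T) {V : List ℕ → Set P} {v : List ℕ} (hv : v ∈ T)
    (hp : ∀ y ∈ T, v <+: y → (p ∈ V y ↔ BSat T V y (.N ψ))) :
    BSat T V v (replaceAll (.N ψ) (.atom p) χ) ↔ BSat T V v χ := by
  induction χ generalizing T V v with
  | tt | atom => rw [replaceAll, if_neg (by simp)]
  | not a ih =>
    rw [replaceAll, if_neg (by simp)]
    exact not_congr (ih hT hv hp)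
  | and a b iha ihb =>
    rw [replaceAll, if_neg (by simp)]
    exact and_congr (iha hT hv hp) (ihb hT hv hp)
  | EX a ih =>
    rw [replaceAll, if_neg (by simp)]
    exact exists_congr fun c => and_congr_right fun hc =>
      ih hT hc fun y hy hcy => hp y hy ((v.prefix_append [c]).trans hcy)
  | EU a b iha ihb =>
    rw [replaceAll, if_neg (by simp)]
    exact exists_congr fun y => and_congr_right fun hvy => and_congr_right fun hy =>
      and_congr (ihb hT hy fun w hw hyw => hp w hw (hvy.trans hyw))
        (forall₄_congr fun z hvz hzy _ =>
          iha hT (hT hzy hy) fun w hw hzw => hp w hw (hvz.trans hzw))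
  | N a ih =>
    rw [replaceAll]
    by_cases ha : BForm.N a = BForm.N ψ
    · rw [if_pos ha, ha]
      exact hp v hv List.prefix_rfl
    · rw [if_neg ha]
      refine ih (hT.reroot v) (by simpa using hv) fun y hy _ => ?_
      rw [bSat_N_reroot]
      exact hp (v ++ y) hy (v.prefix_append y)

end Replacement

section Relabel

variable {P : Type}

def relabel (T : Set (List ℕ)) (V : List ℕ → Set P) (p : P) (χ : BForm P) :
    List ℕ → Set P :=
  fun y => {q | q ≠ p ∧ q ∈ V y} ∪ {q | q = p ∧ BSat T V y χ}

variable {T : Set (List ℕ)} {V : List ℕ → Set P} {p : P} {χ : BForm P}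

theorem mem_relabel_of_ne {q : P} (hq : q ≠ p) (y : List ℕ) :
    q ∈ relabel T V p χ y ↔ q ∈ V y := by
  simp [relabel, hq]

theorem bSat_relabel_of_notMem_atoms {φ : BForm P} (hp : p ∉ atoms φ) (x : List ℕ) :
    BSat T (relabel T V p χ) x φ ↔ BSat T V x φ :=
  bSat_congr_of_atoms φ
    (fun y _ hq => mem_relabel_of_ne (by rintro rfl; exact hp hq) y) T x

theorem mem_relabel_self_iff (hp : p ∉ atoms χ) (y : List ℕ) :
    p ∈ relabel T V p χ y ↔ BSat T (relabel T V p χ) y χ := by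
  rw [bSat_relabel_of_notMem_atoms hp]
  simp [relabel]

end Relabel

/-- if `Nψ` is a subformula of `φ` and `p` is a fresh
proposition, replacing the occurrences of `Nψ` in `φ` by `p` and conjoining
`AG(p ↔ Nψ)` yields an equisatisfiable formula. -/
theorem stmt13 {P : Type} [DecidableEq P] (φ ψ : BForm P) (p : P)
    (hsub : IsSubf (BForm.N ψ) φ)
    (hfresh : p ∉ atoms φ) :
    (∃ T V x, IsTree T ∧ x ∈ T ∧
        BSat T V x (BForm.and (replaceAll (BForm.N ψ) (BForm.atom p) φ)
          (BForm.AG ((BForm.atom p).iff (BForm.N ψ))))) ↔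
      (∃ T V x, IsTree T ∧ x ∈ T ∧ BSat T V x φ) := by
  constructor
  · rintro ⟨T, V, x, hT, hx, hrepl, hAG⟩
    have hp : ∀ y ∈ T, x <+: y → (p ∈ V y ↔ BSat T V y (.N ψ)) := fun y hy hxy =>
      (bSat_iff_iff T V y _ _).mp (((bSat_AG_iff T V x _).mp hAG) y hy hxy)
    exact ⟨T, V, x, hT, hx, (bSat_replaceAll_N_iff φ hT.prefixClosed hx hp).mp hrepl⟩
  · rintro ⟨T, V, x, hT, hx, hφ⟩
    have hpψ : p ∉ atoms (.N ψ) := fun h => hfresh (atoms_subset_of_isSubf φ hsub h)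
    set V' := relabel T V p (.N ψ)
    have hp : ∀ y, p ∈ V' y ↔ BSat T V' y (.N ψ) := mem_relabel_self_iff hpψ
    refine ⟨T, V', x, hT, hx, ?_, ?_⟩
    · rw [bSat_replaceAll_N_iff φ hT.prefixClosed hx fun y _ _ => hp y]
      exact (bSat_relabel_of_notMem_atoms hfresh x).mpr hφ
    · exact (bSat_AG_iff T V' x _).mpr fun y _ _ => (bSat_iff_iff T V' y _ _).mpr (hp y)
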